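/- arXiv:2507.03909 — 3 statements merged into one kernel-verified Lean document; each statement's English description precedes it below -/
import Mathlib

section
/- For the exponential kernel β(t) = γ exp(−ηt) with γ, η > 0, uniform time step τ > 0 and nodes t_i = iτ, the double sum bound τ Σ_{n=1}^{m} (τ Σ_{i=1}^{n} β(t_n − t_i) a_i)^2 ≤ (γ² e^{2ητ}/(2η)) τ² Σ_{n=1}^{m} Σ_{i=1}^{n} a_i² holds for any nonnegative reals a_1, …, a_m. -/
/-!
Cauchy–Schwarz in each row bounds the square of `τ Σᵢ β(tₙ - tᵢ) aᵢ` by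
`(τ Σᵢ β(tₙ - tᵢ)²) · (τ Σᵢ aᵢ²)`. The first factor is `γ²τ` times a partial geometric sum with
ratio `e^{-2ητ}`, hence at most `γ²τ / (1 - e^{-2ητ}) ≤ γ² e^{2ητ} / (2η)` because
`e^x - 1 ≥ x`.
-/

open Finset Real

lemma Finset.sum_Icc_one_reflect {M : Type*} [AddCommMonoid M] (f : ℕ → M) (n : ℕ) :
    ∑ i ∈ Icc 1 n, f (n - i) = ∑ j ∈ range n, f j := by
  rw [← Ico_add_one_right_eq_Icc, sum_Ico_reflect f 1 le_rfl, Nat.add_sub_cancel,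
    Nat.sub_self, range_eq_Ico]

lemma Real.inv_one_sub_exp_neg_le {x : ℝ} (hx : 0 < x) : (1 - exp (-x))⁻¹ ≤ exp x / x := by
  have hexp : exp x * exp (-x) = 1 := by rw [← exp_add, add_neg_cancel, exp_zero]
  have hpos : 0 < 1 - exp (-x) := sub_pos.2 (exp_lt_one_iff.2 (neg_lt_zero.2 hx))
  rw [inv_eq_one_div, div_le_div_iff₀ hpos hx]
  linarith [add_one_le_exp x]

lemma Real.sum_Icc_exp_neg_mul_sub_le {x : ℝ} (hx : 0 < x) (n : ℕ) :
    ∑ i ∈ Icc 1 n, exp (-x * ((n : ℝ) - i)) ≤ exp x / x := by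
  have hpow : ∀ i ∈ Icc 1 n, exp (-x * ((n : ℝ) - i)) = exp (-x) ^ (n - i) := by
    intro i hi
    rw [← exp_nat_mul, Nat.cast_sub (mem_Icc.1 hi).2]
    ring_nf
  rw [sum_congr rfl hpow, sum_Icc_one_reflect (exp (-x) ^ ·), range_eq_Ico]
  have hratio : exp (-x) < 1 := exp_lt_one_iff.2 (neg_lt_zero.2 hx)
  refine (geom_sum_Ico_le_of_lt_one (exp_pos _).le hratio).trans ?_
  rw [pow_zero, one_div]
  exact inv_one_sub_exp_neg_le hx

lemma sq_mul_sum_mul_le_of_mul_sum_sq_le {ι : Type*} (s : Finset ι) (k a : ι → ℝ) {τ K : ℝ}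
    (hτ : 0 ≤ τ) (hk : τ * ∑ i ∈ s, k i ^ 2 ≤ K) :
    (τ * ∑ i ∈ s, k i * a i) ^ 2 ≤ K * (τ * ∑ i ∈ s, a i ^ 2) :=
  calc (τ * ∑ i ∈ s, k i * a i) ^ 2 = τ ^ 2 * (∑ i ∈ s, k i * a i) ^ 2 := mul_pow _ _ _
    _ ≤ τ ^ 2 * ((∑ i ∈ s, k i ^ 2) * ∑ i ∈ s, a i ^ 2) := by
      gcongr; exact sum_mul_sq_le_sq_mul_sq s k a
    _ = (τ * ∑ i ∈ s, k i ^ 2) * (τ * ∑ i ∈ s, a i ^ 2) := by ring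
    _ ≤ K * (τ * ∑ i ∈ s, a i ^ 2) := by gcongr

lemma mul_sum_exp_kernel_sq_le (γ : ℝ) {η τ : ℝ} (hη : 0 < η) (hτ : 0 < τ) (n : ℕ) :
    τ * ∑ i ∈ Icc 1 n, (γ * exp (-η * ((n : ℝ) * τ - (i : ℝ) * τ))) ^ 2
      ≤ γ ^ 2 * exp (2 * η * τ) / (2 * η) := by
  have hsq : ∀ i ∈ Icc 1 n, (γ * exp (-η * ((n : ℝ) * τ - (i : ℝ) * τ))) ^ 2
      = γ ^ 2 * exp (-(2 * η * τ) * ((n : ℝ) - i)) := by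
    intro i _
    rw [mul_pow, ← exp_nat_mul]
    ring_nf
  have hgeom := sum_Icc_exp_neg_mul_sub_le (by positivity : 0 < 2 * η * τ) n
  rw [sum_congr rfl hsq, ← mul_sum]
  calc τ * (γ ^ 2 * ∑ i ∈ Icc 1 n, exp (-(2 * η * τ) * ((n : ℝ) - i)))
      ≤ τ * (γ ^ 2 * (exp (2 * η * τ) / (2 * η * τ))) := by gcongr
    _ = γ ^ 2 * exp (2 * η * τ) / (2 * η) := by field_simp

theorem kernel_double_sum_bound_general
    (γ η τ : ℝ) (hη : 0 < η) (hτ : 0 < τ)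
    (m : ℕ) (a : ℕ → ℝ) :
    τ * ∑ n ∈ Finset.Icc 1 m,
        (τ * ∑ i ∈ Finset.Icc 1 n,
            γ * Real.exp (-η * ((n : ℝ) * τ - (i : ℝ) * τ)) * a i) ^ 2
      ≤ (γ ^ 2 * Real.exp (2 * η * τ) / (2 * η)) * τ ^ 2 *
          ∑ n ∈ Finset.Icc 1 m, ∑ i ∈ Finset.Icc 1 n, (a i) ^ 2 := by
  have hrow : ∀ n ∈ Icc 1 m,
      (τ * ∑ i ∈ Icc 1 n, γ * exp (-η * ((n : ℝ) * τ - (i : ℝ) * τ)) * a i) ^ 2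
        ≤ γ ^ 2 * exp (2 * η * τ) / (2 * η) * (τ * ∑ i ∈ Icc 1 n, a i ^ 2) :=
    fun n _ =>
      sq_mul_sum_mul_le_of_mul_sum_sq_le _ _ a hτ.le (mul_sum_exp_kernel_sq_le γ hη hτ n)
  calc τ * ∑ n ∈ Icc 1 m,
        (τ * ∑ i ∈ Icc 1 n, γ * exp (-η * ((n : ℝ) * τ - (i : ℝ) * τ)) * a i) ^ 2
      ≤ τ * ∑ n ∈ Icc 1 m, γ ^ 2 * exp (2 * η * τ) / (2 * η) * (τ * ∑ i ∈ Icc 1 n, a i ^ 2) :=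
        mul_le_mul_of_nonneg_left (sum_le_sum hrow) hτ.le
    _ = (γ ^ 2 * exp (2 * η * τ) / (2 * η)) * τ ^ 2 * ∑ n ∈ Icc 1 m, ∑ i ∈ Icc 1 n, a i ^ 2 := by
        rw [← mul_sum, ← mul_sum]; ring

theorem kernel_double_sum_bound
    (γ η τ : ℝ) (hγ : 0 < γ) (hη : 0 < η) (hτ : 0 < τ)
    (m : ℕ) (hm : 1 ≤ m) (a : ℕ → ℝ) (ha : ∀ i, 0 ≤ a i) :
    τ * ∑ n ∈ Finset.Icc 1 m,
        (τ * ∑ i ∈ Finset.Icc 1 n,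
            γ * Real.exp (-η * ((n : ℝ) * τ - (i : ℝ) * τ)) * a i) ^ 2
      ≤ (γ ^ 2 * Real.exp (2 * η * τ) / (2 * η)) * τ ^ 2 *
          ∑ n ∈ Finset.Icc 1 m, ∑ i ∈ Finset.Icc 1 n, (a i) ^ 2 :=
  kernel_double_sum_bound_general γ η τ hη hτ m a
end

section
/- Abstract uniqueness with memory under Gronwall: suppose nonnegative reals x_1,…,x_m and y_1,…,y_m satisfy x_n + (ωμτ/2) y_n ≤ C̃ τ (τ Σ_{i=1}^{n} γ e^{−η(t_n − t_i)} y_i^{1/2})² for all n and constants ω, μ, τ, γ, η, C̃ > 0 with t_i = iτ. If τ is small enough that the resulting Gronwall factor applies, then Σ_{n=1}^{m} x_n + (ωμτ/2) Σ_{n=1}^{m} y_n = 0, hence x_n = y_n = 0 for all n. -/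
open Finset Real

theorem uniqueness_with_memory_gronwall
    (ω μ γ η Ctil : ℝ) (hω : 0 < ω) (hμ : 0 < μ) (hγ : 0 < γ)
    (hη : 0 < η) (hC : 0 < Ctil) :
    ∃ τ₀ > 0, ∀ τ : ℝ, 0 < τ → τ ≤ τ₀ →
      ∀ (m : ℕ) (x y : ℕ → ℝ),
        (∀ n, 0 ≤ x n) → (∀ n, 0 ≤ y n) →
        (∀ n ∈ Finset.Icc 1 m,
          x n + ω * μ * τ / 2 * y n ≤
            Ctil * τ * (τ * ∑ i ∈ Finset.Icc 1 n,
                γ * Real.exp (-η * ((n : ℝ) * τ - (i : ℝ) * τ)) *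
                  Real.sqrt (y i)) ^ 2) →
        ((∑ n ∈ Finset.Icc 1 m, x n) +
            ω * μ * τ / 2 * ∑ n ∈ Finset.Icc 1 m, y n = 0
          ∧ ∀ n ∈ Finset.Icc 1 m, x n = 0 ∧ y n = 0) := by
  refine ⟨Real.sqrt (ω * μ / (4 * Ctil * γ ^ 2)), by positivity, ?_⟩
  intro τ hτ hτ0 m x y hx hy h
  have hs := Real.sq_sqrt (show (0:ℝ) ≤ ω * μ / (4 * Ctil * γ ^ 2) by positivity)
  have hτsq : τ ^ 2 ≤ ω * μ / (4 * Ctil * γ ^ 2) := by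
    nlinarith [Real.sqrt_nonneg (ω * μ / (4 * Ctil * γ ^ 2))]
  have key : Ctil * τ ^ 3 * γ ^ 2 < ω * μ * τ / 2 := by
    have h1 : Ctil * γ ^ 2 * τ ^ 2 ≤ ω * μ / 4 := by
      have hpos : (0:ℝ) < 4 * Ctil * γ ^ 2 := by positivity
      rw [le_div_iff₀ hpos] at hτsq
      nlinarith
    nlinarith [mul_le_mul_of_nonneg_right h1 hτ.le, mul_pos (mul_pos hω hμ) hτ]
  have main : ∀ n, n ∈ Finset.Icc 1 m → x n = 0 ∧ y n = 0 := by
    intro n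
    induction n using Nat.strong_induction_on with
    | _ n ih =>
      intro hn
      simp only [Finset.mem_Icc] at hn
      obtain ⟨hn1, hnm⟩ := hn
      have hsum0 : ∀ i ∈ Finset.Icc 1 (n - 1), Real.sqrt (y i) = 0 := by
        intro i hi
        simp only [Finset.mem_Icc] at hi
        have : y i = 0 :=
          (ih i (by omega) (Finset.mem_Icc.mpr ⟨hi.1, by omega⟩)).2
        simp [this]
      have hbound := h n (Finset.mem_Icc.mpr ⟨hn1, hnm⟩)
      have hsplit : (∑ i ∈ Finset.Icc 1 n,
          γ * Real.exp (-η * ((n : ℝ) * τ - (i : ℝ) * τ)) * Real.sqrt (y i))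
          = γ * Real.sqrt (y n) := by
        obtain ⟨k, rfl⟩ : ∃ k, n = k + 1 := ⟨n - 1, by omega⟩
        rw [Finset.sum_Icc_succ_top (by omega)]
        rw [Finset.sum_eq_zero]
        · simp
        · intro i hi
          rw [hsum0 i (by simpa using hi)]
          ring
      rw [hsplit] at hbound
      have hsq : Real.sqrt (y n) ^ 2 = y n := Real.sq_sqrt (hy n)
      have hb2 : x n + ω * μ * τ / 2 * y n ≤ Ctil * τ ^ 3 * γ ^ 2 * y n := by
        calc x n + ω * μ * τ / 2 * y n ≤ Ctil * τ * (τ * (γ * Real.sqrt (y n))) ^ 2 := hbound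
          _ = Ctil * τ ^ 3 * γ ^ 2 * Real.sqrt (y n) ^ 2 := by ring
          _ = Ctil * τ ^ 3 * γ ^ 2 * y n := by rw [hsq]
      have hyn : y n = 0 := by nlinarith [hx n, hy n, mul_nonneg (sub_pos.mpr key).le (hy n)]
      have hxn : x n = 0 := by
        rw [hyn] at hbound
        simp at hbound
        have := hx n
        linarith
      exact ⟨hxn, hyn⟩
  refine ⟨?_, main⟩
  rw [Finset.sum_eq_zero (fun n hn => (main n hn).1),
    Finset.sum_eq_zero (fun n hn => (main n hn).2)]
  ring
end

section
/- Change-of-summation estimate: for c > 0, τ > 0, t_i = iτ, and nonnegative reals u_1, …, u_m, Σ_{n=1}^{m} τ (τ Σ_{i=1}^{n} c e^{−η(t_n − t_i)} u_i)² ≤ (c² e^{2ητ}/η²) τ Σ_{n=1}^{m} u_n² for any η > 0. -/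
open Finset Real

theorem change_of_summation_estimate
    (c η τ : ℝ) (hc : 0 < c) (hη : 0 < η) (hτ : 0 < τ)
    (m : ℕ) (hm : 1 ≤ m) (u : ℕ → ℝ) (hu : ∀ i, 0 ≤ u i) :
    ∑ n ∈ Finset.Icc 1 m,
        τ * (τ * ∑ i ∈ Finset.Icc 1 n,
            c * Real.exp (-η * ((n : ℝ) * τ - (i : ℝ) * τ)) * u i) ^ 2
      ≤ (c ^ 2 * Real.exp (2 * η * τ) / η ^ 2) * τ *
          ∑ n ∈ Finset.Icc 1 m, (u n) ^ 2 := by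
  set x := η * τ with hxdef
  have hx0 : 0 < x := mul_pos hη hτ
  set r := Real.exp (-x) with hrdef
  have hr0 : 0 < r := Real.exp_pos _
  have hr1 : r < 1 := by
    rw [hrdef, Real.exp_lt_one_iff]; linarith
  have hEr : ∀ n i : ℕ, i ≤ n →
      Real.exp (-η * ((n : ℝ) * τ - (i : ℝ) * τ)) = r ^ (n - i) := by
    intro n i hin
    rw [hrdef, ← Real.exp_nat_mul]
    congr 1
    rw [Nat.cast_sub hin]
    ring
  have hgeo : ∀ N : ℕ, τ * ∑ k ∈ Finset.range N, r ^ k ≤ Real.exp x / η := by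
    intro N
    have h1 : ∑ k ∈ Finset.range N, r ^ k ≤ 1 / (1 - r) := by
      rw [le_div_iff₀ (by linarith)]
      have hg := geom_sum_mul r N
      have : (0:ℝ) ≤ r ^ N := le_of_lt (pow_pos hr0 N)
      nlinarith
    have h2 : τ * (1 / (1 - r)) ≤ Real.exp x / η := by
      rw [mul_one_div, div_le_div_iff₀ (by linarith) hη]
      have hex : Real.exp x * r = 1 := by
        rw [hrdef, ← Real.exp_add]; simp
      have hxe : x + 1 ≤ Real.exp x := Real.add_one_le_exp x
      have hτη : τ * η = x := by rw [hxdef]; ring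
      nlinarith
    calc τ * ∑ k ∈ Finset.range N, r ^ k ≤ τ * (1 / (1 - r)) :=
          mul_le_mul_of_nonneg_left h1 (le_of_lt hτ)
      _ ≤ Real.exp x / η := h2
  have hW1 : ∀ n : ℕ, τ * ∑ i ∈ Finset.Icc 1 n, r ^ (n - i) ≤ Real.exp x / η := by
    intro n
    have : ∑ i ∈ Finset.Icc 1 n, r ^ (n - i) = ∑ k ∈ Finset.range n, r ^ k := by
      rw [← Finset.Ico_add_one_right_eq_Icc, Finset.sum_Ico_eq_sum_range]
      calc ∑ k ∈ Finset.range n, r ^ (n - (1 + k))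
          = ∑ k ∈ Finset.range n, r ^ (n - 1 - k) := by
            apply Finset.sum_congr rfl; intro k _; congr 1; omega
        _ = ∑ k ∈ Finset.range n, r ^ k := Finset.sum_range_reflect (fun k => r ^ k) n
    rw [this]; exact hgeo n
  have hW2 : ∀ i : ℕ, τ * ∑ n ∈ Finset.Icc i m, r ^ (n - i) ≤ Real.exp x / η := by
    intro i
    have : ∑ n ∈ Finset.Icc i m, r ^ (n - i) = ∑ k ∈ Finset.range (m + 1 - i), r ^ k := by
      rw [← Finset.Ico_add_one_right_eq_Icc, Finset.sum_Ico_eq_sum_range]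
      apply Finset.sum_congr rfl; intro k _; congr 1; omega
    rw [this]; exact hgeo (m + 1 - i)
  set K := Real.exp x / η with hKdef
  have hK0 : 0 < K := div_pos (Real.exp_pos _) hη
  have step1 : ∀ n ∈ Finset.Icc 1 m,
      τ * (τ * ∑ i ∈ Finset.Icc 1 n,
          c * Real.exp (-η * ((n : ℝ) * τ - (i : ℝ) * τ)) * u i) ^ 2
        ≤ c * K * τ * (τ * ∑ i ∈ Finset.Icc 1 n, c * r ^ (n - i) * u i ^ 2) := by
    intro n hn
    have hrw : ∀ i ∈ Finset.Icc 1 n,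
        c * Real.exp (-η * ((n : ℝ) * τ - (i : ℝ) * τ)) * u i = c * r ^ (n - i) * u i := by
      intro i hi
      rw [Finset.mem_Icc] at hi
      rw [hEr n i hi.2]
    rw [Finset.sum_congr rfl hrw]
    have hCS : (∑ i ∈ Finset.Icc 1 n, c * r ^ (n - i) * u i) ^ 2
        ≤ (∑ i ∈ Finset.Icc 1 n, c * r ^ (n - i)) *
          ∑ i ∈ Finset.Icc 1 n, c * r ^ (n - i) * u i ^ 2 := by
      apply Finset.sum_sq_le_sum_mul_sum_of_sq_eq_mul
      · intro i _; positivity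
      · intro i _; positivity
      · intro i _; ring
    have hw : τ * ∑ i ∈ Finset.Icc 1 n, c * r ^ (n - i) ≤ c * K := by
      rw [← Finset.mul_sum, ← mul_assoc, mul_comm τ c, mul_assoc]
      exact mul_le_mul_of_nonneg_left (hW1 n) (le_of_lt hc)
    have hs2 : (0:ℝ) ≤ ∑ i ∈ Finset.Icc 1 n, c * r ^ (n - i) * u i ^ 2 :=
      Finset.sum_nonneg fun i _ => by positivity
    nlinarith [sq_nonneg τ, mul_le_mul_of_nonneg_right hCS (le_of_lt hτ),
      mul_le_mul_of_nonneg_right hw hs2]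
  have step2 :
      ∑ n ∈ Finset.Icc 1 m,
          c * K * τ * (τ * ∑ i ∈ Finset.Icc 1 n, c * r ^ (n - i) * u i ^ 2)
        ≤ (c ^ 2 * Real.exp (2 * η * τ) / η ^ 2) * τ * ∑ n ∈ Finset.Icc 1 m, (u n) ^ 2 := by
    have hex : ∑ n ∈ Finset.Icc 1 m, ∑ i ∈ Finset.Icc 1 n, c * r ^ (n - i) * u i ^ 2
        = ∑ i ∈ Finset.Icc 1 m, ∑ n ∈ Finset.Icc i m, c * r ^ (n - i) * u i ^ 2 := by
      apply Finset.sum_comm'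
      intro n i
      simp only [Finset.mem_Icc]
      omega
    have hK2 : c ^ 2 * K ^ 2 = c ^ 2 * Real.exp (2 * η * τ) / η ^ 2 := by
      rw [hKdef, div_pow, mul_div_assoc]
      congr 2
      rw [pow_two, ← Real.exp_add]
      congr 1
      rw [hxdef]; ring
    have hre : ∀ n ∈ Finset.Icc 1 m,
        c * K * τ * (τ * ∑ i ∈ Finset.Icc 1 n, c * r ^ (n - i) * u i ^ 2)
          = c * K * τ ^ 2 * ∑ i ∈ Finset.Icc 1 n, c * r ^ (n - i) * u i ^ 2 := by
      intro n _; ring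
    rw [Finset.sum_congr rfl hre, ← Finset.mul_sum, hex, Finset.mul_sum]
    have hb : ∀ i ∈ Finset.Icc 1 m,
        c * K * τ ^ 2 * ∑ n ∈ Finset.Icc i m, c * r ^ (n - i) * u i ^ 2
          ≤ (c ^ 2 * Real.exp (2 * η * τ) / η ^ 2) * τ * u i ^ 2 := by
      intro i _
      have h1 : ∑ n ∈ Finset.Icc i m, c * r ^ (n - i) * u i ^ 2
          = (c * u i ^ 2) * ∑ n ∈ Finset.Icc i m, r ^ (n - i) := by
        rw [Finset.mul_sum]; apply Finset.sum_congr rfl; intro n _; ring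
      rw [h1]
      have h2 : τ * ∑ n ∈ Finset.Icc i m, r ^ (n - i) ≤ K := hW2 i
      calc c * K * τ ^ 2 * ((c * u i ^ 2) * ∑ n ∈ Finset.Icc i m, r ^ (n - i))
          = (c * K * τ * (c * u i ^ 2)) * (τ * ∑ n ∈ Finset.Icc i m, r ^ (n - i)) := by
            ring
        _ ≤ (c * K * τ * (c * u i ^ 2)) * K := by
            apply mul_le_mul_of_nonneg_left h2
            positivity
        _ = (c ^ 2 * K ^ 2) * τ * u i ^ 2 := by ring
        _ = (c ^ 2 * Real.exp (2 * η * τ) / η ^ 2) * τ * u i ^ 2 := by rw [hK2]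
    calc ∑ i ∈ Finset.Icc 1 m, c * K * τ ^ 2 * ∑ n ∈ Finset.Icc i m, c * r ^ (n - i) * u i ^ 2
        ≤ ∑ i ∈ Finset.Icc 1 m, (c ^ 2 * Real.exp (2 * η * τ) / η ^ 2) * τ * u i ^ 2 :=
          Finset.sum_le_sum hb
      _ = (c ^ 2 * Real.exp (2 * η * τ) / η ^ 2) * τ * ∑ n ∈ Finset.Icc 1 m, (u n) ^ 2 := by
          rw [Finset.mul_sum]
  exact le_trans (Finset.sum_le_sum step1) step2
end
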